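/- arXiv:2203.09058 — 3 statements merged into one kernel-verified Lean document; each statement's English description precedes it below -/
import Mathlib

section
/- For every k ∈ ℕ with k ≥ 1 and all x, y ∈ ℝ, 2(x − y)·h_k(x)h_k(y) = −(A^{(y)} − A^{(x)})[ h_{k}(x)h_{k}(y) − h_{k−1}(x)h_{k−1}(y) ], where A^{(x)} = −∂_x + x and A^{(y)} = −∂_y + y. -/
/-!
With the creation operator `A = -d/dt + t`, the Hermite functions satisfy
`A h_k = √(2(k+1)) h_{k+1}` and the three-term recurrence
`2t h_k = √(2(k+1)) h_{k+1} + √(2k) h_{k-1}`, both inherited from `H_{k+1} = 2t H_k - H_k'` and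
`H_{k+1}' = 2(k+1) H_k`. Since `A^{(y)} - A^{(x)}` acts on a product `f(x) g(y)` as
`f ⊗ A g - A f ⊗ g`, the right-hand side becomes a combination of `h_k ⊗ h_{k+1}`, `h_{k-1} ⊗ h_k`
and their transposes, which the recurrence collapses to `2(x - y) h_k(x) h_k(y)`.
-/

open Real

/-- Physicists' Hermite polynomial. -/
noncomputable def H (k : ℕ) (t : ℝ) : ℝ :=
  (-1 : ℝ) ^ k * Real.exp (t ^ 2) * iteratedDeriv k (fun s : ℝ => Real.exp (-s ^ 2)) t

/-- Hermite function. -/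
noncomputable def h (k : ℕ) (t : ℝ) : ℝ :=
  ((2 : ℝ) ^ k * (Nat.factorial k : ℝ) * Real.sqrt Real.pi) ^ (-(1 : ℝ) / 2)
    * H k t * Real.exp (-t ^ 2 / 2)

/-- Creation operator in the x variable. -/
noncomputable def Ax (f : ℝ → ℝ → ℝ) : ℝ → ℝ → ℝ :=
  fun x y => -(deriv (fun s => f s y) x) + x * f x y

/-- Creation operator in the y variable. -/
noncomputable def Ay (f : ℝ → ℝ → ℝ) : ℝ → ℝ → ℝ :=
  fun x y => -(deriv (fun s => f x s) y) + y * f x y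

/-- The operator D = A^(y) - A^(x). -/
noncomputable def D (f : ℝ → ℝ → ℝ) : ℝ → ℝ → ℝ :=
  fun x y => Ay f x y - Ax f x y

noncomputable def creation (f : ℝ → ℝ) (t : ℝ) : ℝ :=
  -deriv f t + t * f t

theorem D_mul_sub_mul {f g u v : ℝ → ℝ} {x y : ℝ} (hf : DifferentiableAt ℝ f x)
    (hu : DifferentiableAt ℝ u x) (hg : DifferentiableAt ℝ g y) (hv : DifferentiableAt ℝ v y) :
    D (fun s t => f s * g t - u s * v t) x y
      = f x * creation g y - creation f x * g y - (u x * creation v y - creation u x * v y) := by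
  simp only [D, Ax, Ay, creation]
  rw [deriv_fun_sub (hg.const_mul _) (hv.const_mul _), deriv_const_mul _ hg, deriv_const_mul _ hv,
    deriv_fun_sub (hf.mul_const _) (hu.mul_const _), deriv_mul_const hf, deriv_mul_const hu]
  ring

open scoped ContDiff in
theorem contDiff_H (k : ℕ) : ContDiff ℝ ∞ (H k) := by
  have hgauss : ContDiff ℝ ∞ (fun s : ℝ => exp (-s ^ 2)) := (contDiff_id.pow 2).neg.exp
  refine (contDiff_const.mul (contDiff_id.pow 2).exp).mul ?_
  rw [iteratedDeriv_eq_iterate]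
  exact hgauss.iterate_deriv k

theorem differentiable_H (k : ℕ) : Differentiable ℝ (H k) :=
  (contDiff_H k).differentiable (by simp)

theorem H_zero : H 0 = fun _ => 1 := by
  funext t
  simp [H, ← exp_add]

theorem iteratedDeriv_gaussian (k : ℕ) :
    iteratedDeriv k (fun s : ℝ => exp (-s ^ 2)) = fun t => (-1) ^ k * H k t * exp (-t ^ 2) := by
  funext t
  have hexp : exp (t ^ 2) * exp (-t ^ 2) = 1 := by rw [← exp_add]; simp
  have hsign : ((-1 : ℝ) ^ k) * (-1) ^ k = 1 := by rw [← mul_pow]; norm_num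
  simp only [H]
  linear_combination (-((-1) ^ k * (-1) ^ k * iteratedDeriv k (fun s : ℝ => exp (-s ^ 2)) t)) * hexp
    - iteratedDeriv k (fun s : ℝ => exp (-s ^ 2)) t * hsign

theorem H_succ (k : ℕ) (t : ℝ) : H (k + 1) t = 2 * t * H k t - deriv (H k) t := by
  have hgauss : HasDerivAt (fun s : ℝ => exp (-s ^ 2)) (-(2 * t) * exp (-t ^ 2)) t := by
    have hsq : HasDerivAt (fun s : ℝ => -s ^ 2) (-(2 * t)) t := by
      simpa using (hasDerivAt_pow 2 t).fun_neg
    simpa [mul_comm] using hsq.exp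
  have hderiv : iteratedDeriv (k + 1) (fun s : ℝ => exp (-s ^ 2)) t
      = (-1) ^ k * deriv (H k) t * exp (-t ^ 2) + (-1) ^ k * H k t * (-(2 * t) * exp (-t ^ 2)) := by
    rw [iteratedDeriv_succ, iteratedDeriv_gaussian]
    exact ((((differentiable_H k t).hasDerivAt).const_mul _).mul hgauss).deriv
  have hexp : exp (t ^ 2) * exp (-t ^ 2) = 1 := by rw [← exp_add]; simp
  have hsign : ((-1 : ℝ) ^ k) * (-1) ^ k = 1 := by rw [← mul_pow]; norm_num
  rw [H, hderiv, pow_succ]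
  linear_combination (2 * t * H k t - deriv (H k) t) * ((-1) ^ k * (-1) ^ k * hexp + hsign)

theorem deriv_H_succ (k : ℕ) : deriv (H (k + 1)) = fun t => 2 * (k + 1) * H k t := by
  induction k with
  | zero =>
    funext t
    have hH1 : H 1 = fun t => 2 * t := by
      funext s
      simp [H_succ 0 s, H_zero]
    simp [hH1, H_zero]
  | succ k ih =>
    have hrec : H (k + 1 + 1) = fun t => 2 * t * H (k + 1) t - 2 * (k + 1) * H k t := by
      funext t
      rw [H_succ, ih]
    funext t
    have hd : HasDerivAt (fun t => 2 * t * H (k + 1) t - 2 * (k + 1) * H k t)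
        (2 * H (k + 1) t + 2 * t * deriv (H (k + 1)) t - 2 * (k + 1) * deriv (H k) t) t := by
      have := (((hasDerivAt_id t).const_mul (2 : ℝ)).fun_mul
        (differentiable_H (k + 1) t).hasDerivAt).fun_sub
          ((differentiable_H k t).hasDerivAt.const_mul (2 * ((k : ℝ) + 1)))
      simpa using this
    rw [hrec, hd.deriv, ih, H_succ k t]
    push_cast
    ring

theorem H_succ_succ (k : ℕ) (t : ℝ) :
    H (k + 1 + 1) t = 2 * t * H (k + 1) t - 2 * (k + 1) * H k t := by
  rw [H_succ, deriv_H_succ]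

noncomputable def hNorm (k : ℕ) : ℝ :=
  ((2 : ℝ) ^ k * (Nat.factorial k : ℝ) * √π) ^ (-(1 : ℝ) / 2)

theorem h_eq (k : ℕ) (t : ℝ) : h k t = hNorm k * H k t * exp (-t ^ 2 / 2) := rfl

theorem hNorm_eq_sqrt_mul_succ (k : ℕ) : hNorm k = √(2 * (k + 1)) * hNorm (k + 1) := by
  have hN : 0 < (2 : ℝ) ^ k * (Nat.factorial k : ℝ) * √π := by
    have := sqrt_pos.mpr pi_pos
    positivity
  have ha : (0 : ℝ) < 2 * (k + 1) := by positivity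
  have hsucc : (2 : ℝ) ^ (k + 1) * ((k + 1).factorial : ℝ) * √π
      = 2 * (k + 1) * ((2 : ℝ) ^ k * (Nat.factorial k : ℝ) * √π) := by
    push_cast [Nat.factorial_succ, pow_succ]
    ring
  rw [hNorm, hNorm, hsucc, mul_rpow ha.le hN.le, ← mul_assoc, sqrt_eq_rpow (2 * (k + 1)),
    ← rpow_add ha]
  norm_num

theorem hasDerivAt_h (k : ℕ) (t : ℝ) :
    HasDerivAt (h k) (hNorm k * (deriv (H k) t - t * H k t) * exp (-t ^ 2 / 2)) t := by
  have hsq : HasDerivAt (fun s : ℝ => -s ^ 2 / 2) (-t) t :=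
    ((hasDerivAt_pow 2 t).fun_neg.div_const 2).congr_deriv (by ring)
  exact (((differentiable_H k t).hasDerivAt.const_mul (hNorm k)).fun_mul hsq.exp).congr_deriv
    (by ring)

theorem differentiable_h (k : ℕ) : Differentiable ℝ (h k) :=
  fun t => (hasDerivAt_h k t).differentiableAt

theorem creation_h (k : ℕ) (t : ℝ) : creation (h k) t = √(2 * (k + 1)) * h (k + 1) t := by
  rw [creation, (hasDerivAt_h k t).deriv, h_eq, h_eq, H_succ]
  linear_combination (2 * t * H k t - deriv (H k) t) * exp (-t ^ 2 / 2) * hNorm_eq_sqrt_mul_succ k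

theorem two_mul_mul_h_succ (k : ℕ) (t : ℝ) :
    2 * t * h (k + 1) t = √(2 * ((k + 1 : ℕ) + 1)) * h (k + 1 + 1) t + √(2 * (k + 1)) * h k t := by
  have hsq : √(2 * ((k : ℝ) + 1)) ^ 2 = 2 * (k + 1) := sq_sqrt (by positivity)
  simp only [h_eq, H_succ_succ]
  linear_combination (2 * t * H (k + 1) t - 2 * (k + 1) * H k t) * exp (-t ^ 2 / 2)
      * hNorm_eq_sqrt_mul_succ (k + 1)
    - √(2 * ((k : ℝ) + 1)) * H k t * exp (-t ^ 2 / 2) * hNorm_eq_sqrt_mul_succ k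
    - hNorm (k + 1) * H k t * exp (-t ^ 2 / 2) * hsq

theorem FDI6_pos (k : ℕ) (hk : 1 ≤ k) (x y : ℝ) :
    2 * (x - y) * (h k x * h k y)
      = -(D (fun s t => h k s * h k t - h (k - 1) s * h (k - 1) t) x y) := by
  obtain ⟨m, rfl⟩ : ∃ m, k = m + 1 := ⟨k - 1, by omega⟩
  rw [Nat.add_sub_cancel, D_mul_sub_mul (differentiable_h _ x) (differentiable_h _ x)
    (differentiable_h _ y) (differentiable_h _ y), creation_h, creation_h, creation_h, creation_h]
  linear_combination h (m + 1) y * two_mul_mul_h_succ m x - h (m + 1) x * two_mul_mul_h_succ m y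
end

section
/- Generalized spatial integration-by-parts: let g : ℝ → ℂ be C¹ with g(x)h_k(x) → 0 and g'(x)h_k(x) → 0 as |x| → ∞ for all k, and let ξ, η, α, β ∈ ℕ. Then 2(ξ − η)·∫ g(x) h_{ξ+α}(x) h_{η+β}(x) dx = ∫ g'(x)[ h_{ξ+α}'(x) h_{η+β}(x) − h_{ξ+α}(x) h_{η+β}'(x) ] dx + 2(β − α)·∫ g(x) h_{ξ+α}(x) h_{η+β}(x) dx. -/
open Real

/-!
Up to a constant, `h_k = H_k(t) e^{-t²/2}` with `H_k` the physicists' Hermite polynomial coming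
out of the iterated derivatives of `e^{-t²}`, and Hermite's equation `H'' - 2tH' + 2kH = 0` turns
into `h_k'' = (t² - (2k+1)) h_k`. By Lagrange's identity the Wronskian
`W = h_m' h_n - h_m h_n'` then satisfies `W' = 2(n - m) h_m h_n`, and integrating `g' W` by parts
gives `∫ g' W = 2(m - n) ∫ g h_m h_n`; with `m = ξ + α`, `n = η + β` this is the claim.
The decay hypotheses make `g h_j` and `g' h_j` bounded, while `h_j` and `h_j'` are polynomials
times a Gaussian, hence integrable; so every integrand is integrable and no boundary term survives.
-/

open MeasureTheory Filter Polynomial Topology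

theorem exists_norm_le_of_tendsto_cocompact {α E : Type*} [TopologicalSpace α]
    [NormedAddCommGroup E] {f : α → E} (hf : Continuous f)
    (h0 : Tendsto f (cocompact α) (𝓝 0)) : ∃ C, ∀ x, ‖f x‖ ≤ C := by
  obtain ⟨C, hC⟩ :=
    isBounded_iff_forall_norm_le.1 (ZeroAtInftyContinuousMap.mk ⟨f, hf⟩ h0).isBounded_range
  exact ⟨C, fun x => hC _ ⟨x, rfl⟩⟩

theorem MeasureTheory.Integrable.mul_of_tendsto_cocompact {𝕜 : Type*} [NormedRing 𝕜]
    {f φ : ℝ → 𝕜} (hφ : Integrable φ) (h0 : Tendsto f (cocompact ℝ) (𝓝 0))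
    (hf : Continuous f) : Integrable (fun x => f x * φ x) := by
  obtain ⟨C, hC⟩ := exists_norm_le_of_tendsto_cocompact hf h0
  exact hφ.bdd_mul hf.aestronglyMeasurable (Eventually.of_forall hC)

section PolynomialMulGaussian

variable (p : ℝ[X])

theorem hasDerivAt_eval_mul_exp_neg_mul_sq (a t : ℝ) :
    HasDerivAt (fun t => p.eval t * exp (-a * t ^ 2))
      ((derivative p - C (2 * a) * X * p).eval t * exp (-a * t ^ 2)) t := by
  have hq : HasDerivAt (fun t => -a * t ^ 2) (-a * (2 * t)) t := by
    simpa using (hasDerivAt_pow 2 t).const_mul (-a)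
  refine ((p.hasDerivAt t).fun_mul hq.exp).congr_deriv ?_
  simp only [eval_sub, eval_mul, eval_C, eval_X]
  ring

theorem tendsto_eval_mul_exp_neg_mul_sq_cocompact {a : ℝ} (ha : 0 < a) :
    Tendsto (fun t => p.eval t * exp (-a * t ^ 2)) (cocompact ℝ) (𝓝 0) := by
  have hpow (i : ℕ) :
      Tendsto (fun t : ℝ => t ^ i * exp (-a * t ^ 2)) (cocompact ℝ) (𝓝 0) := by
    refine tendsto_zero_iff_norm_tendsto_zero.2 ?_
    convert tendsto_rpow_abs_mul_exp_neg_mul_sq_cocompact ha i using 2 with t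
    simp [abs_of_pos (exp_pos _)]
  have hsum := tendsto_finsetSum (Finset.range (p.natDegree + 1))
    fun i _ => (hpow i).const_mul (p.coeff i)
  simp only [mul_zero, Finset.sum_const_zero] at hsum
  convert hsum using 2 with t
  rw [eval_eq_sum_range, Finset.sum_mul]
  simp only [mul_assoc]

theorem integrable_eval_mul_exp_neg_mul_sq {a : ℝ} (ha : 0 < a) :
    Integrable (fun t => p.eval t * exp (-a * t ^ 2)) := by
  convert (integrable_exp_neg_mul_sq (half_pos ha)).mul_of_tendsto_cocompact
    (tendsto_eval_mul_exp_neg_mul_sq_cocompact p (half_pos ha)) (by fun_prop) using 2 with t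
  rw [mul_assoc, ← exp_add]
  ring_nf

end PolynomialMulGaussian

noncomputable def physHermite : ℕ → ℝ[X]
  | 0 => 1
  | k + 1 => 2 * X * physHermite k - derivative (physHermite k)

theorem physHermite_succ (k : ℕ) :
    physHermite (k + 1) = 2 * X * physHermite k - derivative (physHermite k) := rfl

theorem derivative_physHermite_succ (k : ℕ) :
    derivative (physHermite (k + 1)) = 2 * (k + 1) * physHermite k := by
  induction k with
  | zero => simp [physHermite]
  | succ k ih =>
    have ih' : derivative (derivative (physHermite (k + 1)))
        = 2 * (k + 1) * derivative (physHermite k) := by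
      rw [ih]; simp
    rw [physHermite_succ (k + 1), derivative_sub, derivative_mul, derivative_mul, ih', ih]
    simp only [derivative_ofNat, derivative_X, Nat.cast_add, Nat.cast_one]
    linear_combination (-2 * (k + 1) : ℝ[X]) * physHermite_succ k

theorem physHermite_ode (k : ℕ) :
    derivative (derivative (physHermite k))
      = 2 * X * derivative (physHermite k) - 2 * (k : ℝ[X]) * physHermite k := by
  cases k with
  | zero => simp [physHermite]
  | succ k =>
    have h := derivative_physHermite_succ (k + 1)
    rw [physHermite_succ (k + 1), derivative_sub, derivative_mul, derivative_mul,
      derivative_ofNat, derivative_X] at h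
    push_cast at h ⊢
    linear_combination -h

theorem iteratedDeriv_exp_neg_sq (k : ℕ) :
    iteratedDeriv k (fun s : ℝ => exp (-s ^ 2))
      = fun t => (-1) ^ k * (physHermite k).eval t * exp (-t ^ 2) := by
  induction k with
  | zero => simp [physHermite]
  | succ k ih =>
    ext t
    have hd := hasDerivAt_eval_mul_exp_neg_mul_sq (C ((-1) ^ k) * physHermite k) 1 t
    simp only [neg_mul, one_mul, eval_mul, eval_C, derivative_C_mul] at hd
    rw [iteratedDeriv_succ, ih, hd.deriv, physHermite_succ]
    simp only [eval_sub, eval_mul, eval_C, eval_X, eval_ofNat, mul_one, pow_succ]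
    ring

theorem H_eq_eval_physHermite (k : ℕ) : H k = fun t => (physHermite k).eval t := by
  ext t
  rw [H, iteratedDeriv_exp_neg_sq]
  have hexp : exp (t ^ 2) * exp (-t ^ 2) = 1 := by rw [← exp_add]; simp
  have hsign : ((-1 : ℝ) ^ k) ^ 2 = 1 := by rw [← pow_mul, mul_comm, pow_mul]; norm_num
  linear_combination (physHermite k).eval t * (((-1) ^ k) ^ 2 * hexp + hsign)

noncomputable def hermiteFunPoly (k : ℕ) : ℝ[X] :=
  C (((2 : ℝ) ^ k * (Nat.factorial k : ℝ) * Real.sqrt Real.pi) ^ (-(1 : ℝ) / 2))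
    * physHermite k

theorem h_eq_eval_mul_exp (k : ℕ) :
    h k = fun t => (hermiteFunPoly k).eval t * exp (-2⁻¹ * t ^ 2) := by
  ext t
  rw [h, H_eq_eval_physHermite, hermiteFunPoly, eval_mul, eval_C]
  ring_nf

theorem hasDerivAt_h_s12 (k : ℕ) (t : ℝ) :
    HasDerivAt (h k) ((derivative (hermiteFunPoly k) - X * hermiteFunPoly k).eval t
      * exp (-2⁻¹ * t ^ 2)) t := by
  simpa [h_eq_eval_mul_exp] using hasDerivAt_eval_mul_exp_neg_mul_sq (hermiteFunPoly k) 2⁻¹ t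

theorem deriv_h (k : ℕ) : deriv (h k) = fun t =>
    (derivative (hermiteFunPoly k) - X * hermiteFunPoly k).eval t * exp (-2⁻¹ * t ^ 2) :=
  funext fun t => (hasDerivAt_h_s12 k t).deriv

theorem hermiteFunPoly_ode (k : ℕ) :
    derivative (derivative (hermiteFunPoly k) - X * hermiteFunPoly k)
      - X * (derivative (hermiteFunPoly k) - X * hermiteFunPoly k)
      = (X ^ 2 - (2 * (k : ℝ[X]) + 1)) * hermiteFunPoly k := by
  obtain ⟨c, hc⟩ : ∃ c, hermiteFunPoly k = C c * physHermite k := ⟨_, rfl⟩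
  simp only [hc, derivative_sub, derivative_mul, derivative_C, derivative_X, zero_mul, zero_add,
    one_mul]
  linear_combination C c * physHermite_ode k

theorem hasDerivAt_deriv_h (k : ℕ) (t : ℝ) :
    HasDerivAt (deriv (h k)) ((t ^ 2 - (2 * k + 1)) * h k t) t := by
  have hd := hasDerivAt_eval_mul_exp_neg_mul_sq
    (derivative (hermiteFunPoly k) - X * hermiteFunPoly k) 2⁻¹ t
  rw [show (2 : ℝ) * 2⁻¹ = 1 by norm_num, C_1, one_mul, hermiteFunPoly_ode] at hd
  rw [deriv_h, h_eq_eval_mul_exp]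
  convert hd using 1
  simp only [eval_mul, eval_sub, eval_pow, eval_X, eval_add, eval_ofNat, eval_natCast, eval_one]
  ring

theorem integrable_h (k : ℕ) : Integrable (h k) := by
  rw [h_eq_eval_mul_exp]; exact integrable_eval_mul_exp_neg_mul_sq _ (by norm_num)

theorem integrable_deriv_h (k : ℕ) : Integrable (deriv (h k)) := by
  rw [deriv_h]; exact integrable_eval_mul_exp_neg_mul_sq _ (by norm_num)

theorem continuous_h (k : ℕ) : Continuous (h k) :=
  continuous_iff_continuousAt.2 fun t => (hasDerivAt_h_s12 k t).continuousAt

theorem continuous_deriv_h (k : ℕ) : Continuous (deriv (h k)) :=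
  continuous_iff_continuousAt.2 fun t => (hasDerivAt_deriv_h k t).continuousAt

/-- Lagrange's identity, for eigenfunctions of `-d²/dt² + q` with eigenvalues `a` and `b`. -/
theorem hasDerivAt_wronskian {u v : ℝ → ℝ} {q a b t : ℝ} (hu : DifferentiableAt ℝ u t)
    (hv : DifferentiableAt ℝ v t) (hu' : HasDerivAt (deriv u) ((q - a) * u t) t)
    (hv' : HasDerivAt (deriv v) ((q - b) * v t) t) :
    HasDerivAt (fun s => deriv u s * v s - u s * deriv v s) ((b - a) * (u t * v t)) t := by
  refine ((hu'.fun_mul hv.hasDerivAt).fun_sub (hu.hasDerivAt.fun_mul hv')).congr_deriv ?_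
  ring

theorem integrable_mul_wronskian_h {f : ℝ → ℂ} (hf : Continuous f) {m n : ℕ}
    (hfm : Tendsto (fun x => f x * (h m x : ℂ)) (cocompact ℝ) (𝓝 0))
    (hfn : Tendsto (fun x => f x * (h n x : ℂ)) (cocompact ℝ) (𝓝 0)) :
    Integrable (fun x => f x * ((deriv (h m) x * h n x - h m x * deriv (h n) x : ℝ) : ℂ)) := by
  have hm := (integrable_deriv_h m).ofReal.mul_of_tendsto_cocompact hfn
    (hf.mul (Complex.continuous_ofReal.comp (continuous_h n)))
  have hn := (integrable_deriv_h n).ofReal.mul_of_tendsto_cocompact hfm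
    (hf.mul (Complex.continuous_ofReal.comp (continuous_h m)))
  convert hm.sub hn using 2 with x
  simp only [Pi.sub_apply, RCLike.ofReal_eq_complex_ofReal]
  push_cast
  ring

theorem integral_deriv_mul_wronskian_h {g : ℝ → ℂ} (hg : ContDiff ℝ 1 g) {m n : ℕ}
    (hgm : Tendsto (fun x => g x * (h m x : ℂ)) (cocompact ℝ) (𝓝 0))
    (hgn : Tendsto (fun x => g x * (h n x : ℂ)) (cocompact ℝ) (𝓝 0))
    (hg'm : Tendsto (fun x => deriv g x * (h m x : ℂ)) (cocompact ℝ) (𝓝 0))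
    (hg'n : Tendsto (fun x => deriv g x * (h n x : ℂ)) (cocompact ℝ) (𝓝 0)) :
    ∫ x, deriv g x * (((deriv (h m) x : ℝ) : ℂ) * (h n x : ℂ)
        - (h m x : ℂ) * ((deriv (h n) x : ℝ) : ℂ))
      = 2 * ((m : ℂ) - n) * ∫ x, g x * (h m x : ℂ) * (h n x : ℂ) := by
  have hW (x : ℝ) := (hasDerivAt_wronskian (q := x ^ 2) (hasDerivAt_h_s12 m x).differentiableAt
    (hasDerivAt_h_s12 n x).differentiableAt (hasDerivAt_deriv_h m x)
    (hasDerivAt_deriv_h n x)).ofReal_comp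
  have hgmn : Integrable (fun x => g x * (h m x : ℂ) * (h n x : ℂ)) := by
    simpa only [RCLike.ofReal_eq_complex_ofReal] using
      (integrable_h n).ofReal.mul_of_tendsto_cocompact hgm
        (hg.continuous.mul (Complex.continuous_ofReal.comp (continuous_h m)))
  have hgW := integral_mul_deriv_eq_deriv_mul_of_integrable
    (fun x _ => (hg.differentiable one_ne_zero x).hasDerivAt) (fun x _ => hW x)
    (by
      convert hgmn.const_mul (2 * ((n : ℂ) - m)) using 2 with x
      simp only [Pi.mul_apply]
      push_cast
      ring)
    (integrable_mul_wronskian_h (hg.continuous_deriv le_rfl) hg'm hg'n)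
    (integrable_mul_wronskian_h hg.continuous hgm hgn)
  calc _ = ∫ x, deriv g x * ((deriv (h m) x * h n x - h m x * deriv (h n) x : ℝ) : ℂ) := by
        push_cast; rfl
    _ = -∫ x, g x * (((2 * n + 1 - (2 * m + 1)) * (h m x * h n x) : ℝ) : ℂ) := by
        rw [hgW, neg_neg]
    _ = _ := by
        rw [← integral_const_mul, ← integral_neg]
        congr 1 with x
        push_cast
        ring

theorem spatial_integration_by_parts (g : ℝ → ℂ) (hg : ContDiff ℝ 1 g)
    (hdecay : ∀ k : ℕ, Tendsto (fun x => g x * (h k x : ℂ)) (cocompact ℝ) (nhds 0))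
    (hdecay' : ∀ k : ℕ, Tendsto (fun x => deriv g x * (h k x : ℂ)) (cocompact ℝ) (nhds 0))
    (ξ η α β : ℕ) :
    2 * ((ξ : ℂ) - (η : ℂ)) * ∫ x : ℝ, g x * (h (ξ + α) x : ℂ) * (h (η + β) x : ℂ)
      = (∫ x : ℝ, deriv g x *
            ((Complex.ofReal (deriv (h (ξ + α)) x)) * (h (η + β) x : ℂ)
              - (h (ξ + α) x : ℂ) * (Complex.ofReal (deriv (h (η + β)) x))))
        + 2 * ((β : ℂ) - (α : ℂ)) * ∫ x : ℝ, g x * (h (ξ + α) x : ℂ) * (h (η + β) x : ℂ) := by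
  rw [integral_deriv_mul_wronskian_h hg (hdecay _) (hdecay _) (hdecay' _) (hdecay' _)]
  push_cast
  ring
end

section
/- Cotlar–Knapp–Stein almost orthogonality lemma: let {T_j}_{j∈ℤ} be bounded operators on a Hilbert space H such that ‖T_j* T_k‖ + ‖T_j T_k*‖ ≤ γ(j−k) for all j, k, where γ : ℤ → [0,∞) satisfies Σ_{m∈ℤ} √(γ(m)) = C < ∞. Then for every finite subset Λ ⊆ ℤ, ‖Σ_{j∈Λ} T_j‖ ≤ C. -/
/-!
With `S = ∑ T j`, the C⋆-identity gives `‖S‖ ^ (2m) = ‖(S⋆ S) ^ m‖` for `m` a power of two, and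
`(S⋆ S) ^ m` expands into the words `T_{j₁}⋆ T_{k₁} ⋯ T_{jₘ}⋆ T_{kₘ}`. Grouping a word as
`(T_{j₁}⋆ T_{k₁}) ⋯ (T_{jₘ}⋆ T_{kₘ})` or as `T_{j₁}⋆ (T_{k₁} T_{j₂}⋆) ⋯ T_{kₘ}` bounds it by two
products of values of `γ` (the second up to `‖T_{j₁}‖ ‖T_{kₘ}‖ ≤ C ^ 2`); their geometric mean is
a product of `√γ` along the path `j₁, k₁, j₂, …, kₘ`, and summing over the path one index at a time gives
`‖S‖ ^ (2m) ≤ #Λ · C ^ (2m)`. Taking `2m`-th roots and letting `m → ∞` yields `‖S‖ ≤ C`.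
-/

open Filter Topology

namespace Finset

variable {α : Type*}

def listsOfLength (s : Finset α) : ℕ → Finset (List α)
  | 0 => {[]}
  | n + 1 => (s ×ˢ s.listsOfLength n).map
      ⟨fun p => p.1 :: p.2, fun p q h => by simpa [Prod.ext_iff] using h⟩

theorem sum_listsOfLength_succ {M : Type*} [AddCommMonoid M] (s : Finset α) (n : ℕ)
    (F : List α → M) :
    ∑ L ∈ s.listsOfLength (n + 1), F L = ∑ a ∈ s, ∑ L ∈ s.listsOfLength n, F (a :: L) := by
  rw [listsOfLength, sum_map, sum_product]
  rfl

theorem sum_pow_eq_sum_listsOfLength {R : Type*} [Semiring R] (s : Finset α) (f : α → R)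
    (n : ℕ) : (∑ a ∈ s, f a) ^ n = ∑ L ∈ s.listsOfLength n, (L.map f).prod := by
  induction n with
  | zero => simp [listsOfLength]
  | succ n ih =>
    rw [pow_succ', ih, sum_listsOfLength_succ, sum_mul_sum]
    simp only [List.map_cons, List.prod_cons]

end Finset

theorem le_mul_of_le_sq_of_le_sq {x a b : ℝ} (ha : 0 ≤ a) (hb : 0 ≤ b) (hxa : x ≤ a ^ 2)
    (hxb : x ≤ b ^ 2) : x ≤ a * b := by
  rcases le_total x 0 with hx | hx
  · exact hx.trans (mul_nonneg ha hb)
  · refine (pow_le_pow_iff_left₀ hx (mul_nonneg ha hb) two_ne_zero).mp ?_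
    rw [mul_pow, sq]
    exact mul_le_mul hxa hxb hx (sq_nonneg a)

theorem le_of_forall_pow_le_mul_pow {x y c : ℝ} {N : ℕ → ℕ} (hy : 0 ≤ y)
    (hN : Tendsto N atTop atTop) (h : ∀ t, x ^ N t ≤ c * y ^ N t) : x ≤ y := by
  by_contra! hxy
  have hx : 0 < x := hy.trans_lt hxy
  have hlim : Tendsto (fun t => c * (y / x) ^ N t) atTop (𝓝 0) := by
    simpa using ((tendsto_pow_atTop_nhds_zero_of_lt_one (div_nonneg hy hx.le)
      ((div_lt_one hx).mpr hxy)).comp hN).const_mul c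
  refine absurd (ge_of_tendsto' hlim fun t => ?_) (not_le.mpr one_pos)
  rw [div_pow, mul_div_assoc', le_div_iff₀ (pow_pos hx _), one_mul]
  exact h t

section Weights

variable {ι : Type*} (K : ι → ι → ℝ)

def pairWeight (L : List (ι × ι)) : ℝ := (L.map fun p => K p.1 p.2).prod

def linkWeight : ι → List (ι × ι) → ℝ
  | _, [] => 1
  | k, p :: L => K k p.1 * linkWeight p.2 L

variable {K}

theorem pairWeight_nonneg (hK : ∀ j k, 0 ≤ K j k) (L : List (ι × ι)) : 0 ≤ pairWeight K L :=
  List.prod_nonneg fun _ ha => by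
    obtain ⟨p, -, rfl⟩ := List.mem_map.mp ha
    exact hK _ _

theorem linkWeight_nonneg (hK : ∀ j k, 0 ≤ K j k) (k : ι) (L : List (ι × ι)) :
    0 ≤ linkWeight K k L := by
  induction L generalizing k with
  | nil => exact zero_le_one
  | cons p L ih => exact mul_nonneg (hK _ _) (ih p.2)

theorem sum_pairWeight_mul_linkWeight_le {s : Finset ι} {C : ℝ} (hK : ∀ j k, 0 ≤ K j k)
    (hC : 0 ≤ C) (hrow : ∀ j, ∑ k ∈ s, K j k ≤ C) (n : ℕ) (k : ι) :
    ∑ L ∈ (s ×ˢ s).listsOfLength n, pairWeight K L * linkWeight K k L ≤ C ^ (2 * n) := by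
  induction n generalizing k with
  | zero => simp [Finset.listsOfLength, pairWeight, linkWeight]
  | succ n ih =>
    calc ∑ L ∈ (s ×ˢ s).listsOfLength (n + 1), pairWeight K L * linkWeight K k L
        = ∑ j ∈ s, K k j * ∑ k' ∈ s, K j k' *
            ∑ L ∈ (s ×ˢ s).listsOfLength n, pairWeight K L * linkWeight K k' L := by
          simp only [Finset.sum_listsOfLength_succ, Finset.sum_product, Finset.mul_sum,
            pairWeight, linkWeight, List.map_cons, List.prod_cons]
          refine Finset.sum_congr rfl fun _ _ => Finset.sum_congr rfl fun _ _ =>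
            Finset.sum_congr rfl fun _ _ => by ring
      _ ≤ ∑ j ∈ s, K k j * ∑ k' ∈ s, K j k' * C ^ (2 * n) := by
          gcongr with j _ k' _
          · exact hK _ _
          · exact hK _ _
          · exact ih k'
      _ ≤ ∑ j ∈ s, K k j * (C * C ^ (2 * n)) := by
          gcongr with j _
          · exact hK _ _
          · rw [← Finset.sum_mul]
            exact mul_le_mul_of_nonneg_right (hrow j) (by positivity)
      _ ≤ C ^ (2 * (n + 1)) := by
          rw [← Finset.sum_mul]
          refine (mul_le_mul_of_nonneg_right (hrow k) (by positivity)).trans_eq ?_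
          ring

end Weights

section CStarRing

variable {ι A : Type*} [NormedRing A] [StarRing A]

def gramWord (T : ι → A) (L : List (ι × ι)) : A := (L.map fun p => star (T p.1) * T p.2).prod

variable {T : ι → A} {K : ι → ι → ℝ}

theorem norm_gramWord_le [CStarRing A]
    (hTT : ∀ j k, ‖star (T j) * T k‖ ≤ K j k ^ 2) (L : List (ι × ι)) :
    ‖gramWord T L‖ ≤ pairWeight K L ^ 2 := by
  induction L with
  | nil =>
    simp only [gramWord, pairWeight, List.map_nil, List.prod_nil, one_pow]
    nontriviality A
    exact CStarRing.norm_one.le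
  | cons p L ih =>
    calc ‖gramWord T (p :: L)‖ ≤ ‖star (T p.1) * T p.2‖ * ‖gramWord T L‖ := norm_mul_le _ _
      _ ≤ K p.1 p.2 ^ 2 * pairWeight K L ^ 2 :=
          mul_le_mul (hTT _ _) ih (norm_nonneg _) (sq_nonneg _)
      _ = pairWeight K (p :: L) ^ 2 := by simp [pairWeight, mul_pow]

theorem norm_mul_gramWord_le {M : ℝ} (hTT' : ∀ j k, ‖T j * star (T k)‖ ≤ K j k ^ 2)
    (hT : ∀ j, ‖T j‖ ≤ M) (k : ι) (L : List (ι × ι)) :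
    ‖T k * gramWord T L‖ ≤ M * linkWeight K k L ^ 2 := by
  induction L generalizing k with
  | nil => simpa [gramWord, linkWeight] using hT k
  | cons p L ih =>
    calc ‖T k * gramWord T (p :: L)‖ = ‖(T k * star (T p.1)) * (T p.2 * gramWord T L)‖ := by
          simp only [gramWord, List.map_cons, List.prod_cons, mul_assoc]
      _ ≤ K k p.1 ^ 2 * (M * linkWeight K p.2 L ^ 2) :=
          (norm_mul_le _ _).trans
            (mul_le_mul (hTT' _ _) (ih p.2) (norm_nonneg _) (sq_nonneg _))
      _ = M * linkWeight K k (p :: L) ^ 2 := by rw [linkWeight]; ring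

/-- Geometric mean of the two groupings `(T_{j₁}⋆ T_{k₁}) ⋯ (T_{jₙ}⋆ T_{kₙ})` and
`T_{j₁}⋆ (T_{k₁} T_{j₂}⋆) ⋯ (T_{kₙ₋₁} T_{jₙ}⋆) T_{kₙ}` of a word. -/
theorem norm_gramWord_cons_le [CStarRing A] {M : ℝ} (hK : ∀ j k, 0 ≤ K j k)
    (hTT : ∀ j k, ‖star (T j) * T k‖ ≤ K j k ^ 2) (hTT' : ∀ j k, ‖T j * star (T k)‖ ≤ K j k ^ 2)
    (hT : ∀ j, ‖T j‖ ≤ M) (j k : ι) (L : List (ι × ι)) :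
    ‖gramWord T ((j, k) :: L)‖ ≤ M * K j k * (pairWeight K L * linkWeight K k L) := by
  have hM : 0 ≤ M := (norm_nonneg _).trans (hT j)
  have hpair : ‖gramWord T ((j, k) :: L)‖ ≤ (K j k * pairWeight K L) ^ 2 := by
    simpa [pairWeight] using norm_gramWord_le hTT ((j, k) :: L)
  have hlink : ‖gramWord T ((j, k) :: L)‖ ≤ (M * linkWeight K k L) ^ 2 :=
    calc ‖gramWord T ((j, k) :: L)‖ = ‖star (T j) * (T k * gramWord T L)‖ := by
          simp only [gramWord, List.map_cons, List.prod_cons, mul_assoc]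
      _ ≤ M * (M * linkWeight K k L ^ 2) :=
          (norm_mul_le _ _).trans (mul_le_mul ((norm_star _).trans_le (hT j))
            (norm_mul_gramWord_le hTT' hT k L) (norm_nonneg _) hM)
      _ = (M * linkWeight K k L) ^ 2 := by ring
  calc ‖gramWord T ((j, k) :: L)‖ ≤ (K j k * pairWeight K L) * (M * linkWeight K k L) :=
        le_mul_of_le_sq_of_le_sq (mul_nonneg (hK j k) (pairWeight_nonneg hK L))
          (mul_nonneg hM (linkWeight_nonneg hK k L)) hpair hlink
    _ = M * K j k * (pairWeight K L * linkWeight K k L) := by ring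

theorem norm_star_sum_mul_sum_pow_le [CStarRing A] [Fintype ι] {C : ℝ}
    (hK : ∀ j k, 0 ≤ K j k) (hC : 0 ≤ C)
    (hTT : ∀ j k, ‖star (T j) * T k‖ ≤ K j k ^ 2) (hTT' : ∀ j k, ‖T j * star (T k)‖ ≤ K j k ^ 2)
    (hrow : ∀ j, ∑ k, K j k ≤ C) {n : ℕ} (hn : n ≠ 0) :
    ‖(star (∑ j, T j) * ∑ j, T j) ^ n‖ ≤ Fintype.card ι * C ^ (2 * n) := by
  obtain ⟨n, rfl⟩ := Nat.exists_eq_succ_of_ne_zero hn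
  have hT : ∀ j, ‖T j‖ ≤ C := fun j => by
    refine ((pow_le_pow_iff_left₀ (norm_nonneg _) (hK j j) two_ne_zero).mp ?_).trans
      ((Finset.single_le_sum (fun k _ => hK j k) (Finset.mem_univ j)).trans (hrow j))
    simpa [sq, CStarRing.norm_star_mul_self] using hTT j j
  have hexpand : (star (∑ j, T j) * ∑ j, T j) ^ (n + 1) =
      ∑ L ∈ (Finset.univ ×ˢ Finset.univ).listsOfLength (n + 1), gramWord T L := by
    rw [star_sum, Finset.sum_mul_sum, ← Finset.sum_product',
      Finset.sum_pow_eq_sum_listsOfLength]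
    rfl
  rw [hexpand]
  calc _ ≤ ∑ L ∈ (Finset.univ ×ˢ Finset.univ).listsOfLength (n + 1), ‖gramWord T L‖ :=
        norm_sum_le _ _
    _ ≤ ∑ j, ∑ k, C * K j k * ∑ L ∈ (Finset.univ ×ˢ Finset.univ).listsOfLength n,
          pairWeight K L * linkWeight K k L := by
        simp only [Finset.sum_listsOfLength_succ, Finset.sum_product, Finset.mul_sum]
        gcongr with j _ k _ L _
        exact norm_gramWord_cons_le hK hTT hTT' hT j k L
    _ ≤ ∑ j, ∑ k, C * K j k * C ^ (2 * n) := by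
        gcongr with j _ k _
        · exact mul_nonneg hC (hK j k)
        · exact sum_pairWeight_mul_linkWeight_le hK hC hrow n k
    _ ≤ ∑ _j : ι, C * C * C ^ (2 * n) := by
        gcongr with j _
        simp only [← Finset.sum_mul, ← Finset.mul_sum]
        gcongr
        exact hrow j
    _ = Fintype.card ι * C ^ (2 * (n + 1)) := by
        rw [Finset.sum_const, Finset.card_univ, nsmul_eq_mul]
        ring

theorem norm_sum_le_of_almost_orthogonal [CStarRing A] [Fintype ι] {C : ℝ}
    (hK : ∀ j k, 0 ≤ K j k) (hC : 0 ≤ C) (hTT : ∀ j k, ‖star (T j) * T k‖ ≤ K j k ^ 2)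
    (hTT' : ∀ j k, ‖T j * star (T k)‖ ≤ K j k ^ 2) (hrow : ∀ j, ∑ k, K j k ≤ C) :
    ‖∑ j, T j‖ ≤ C := by
  refine le_of_forall_pow_le_mul_pow hC (c := Fintype.card ι)
    (N := fun t => 2 ^ (t + 1))
    (tendsto_pow_atTop_atTop_of_one_lt one_lt_two |>.comp (tendsto_add_atTop_nat 1))
    fun t => ?_
  calc ‖∑ j, T j‖ ^ 2 ^ (t + 1) = ‖(star (∑ j, T j) * ∑ j, T j) ^ 2 ^ t‖ := by
        rw [(IsSelfAdjoint.star_mul_self _).norm_pow_two_pow, CStarRing.norm_star_mul_self,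
          ← sq, ← pow_mul, pow_succ']
    _ ≤ Fintype.card ι * C ^ 2 ^ (t + 1) := by
        simpa [pow_succ'] using norm_star_sum_mul_sum_pow_le hK hC hTT hTT' hrow
          (pow_ne_zero t two_ne_zero)

end CStarRing

theorem sum_apply_sub_le_of_hasSum {G : Type*} [AddGroup G] {f : G → ℝ} {C : ℝ}
    (hf : ∀ m, 0 ≤ f m) (hsum : HasSum f C) (j : G) (s : Finset G) :
    ∑ k ∈ s, f (j - k) ≤ C := by
  classical
  rw [← Finset.sum_image (sub_right_injective (b := j)).injOn]
  exact sum_le_hasSum _ (fun m _ => hf m) hsum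

open ContinuousLinearMap

theorem cotlar_knapp_stein_general {H : Type*} [NormedAddCommGroup H] [InnerProductSpace ℂ H]
    [CompleteSpace H] (T : ℤ → H →L[ℂ] H) (γ : ℤ → ℝ) (C : ℝ)
    (hbound : ∀ j k : ℤ,
      ‖(adjoint (T j)).comp (T k)‖ + ‖(T j).comp (adjoint (T k))‖ ≤ γ (j - k))
    (hsum : HasSum (fun m => Real.sqrt (γ m)) C) :
    ∀ Λ : Finset ℤ, ‖∑ j ∈ Λ, T j‖ ≤ C := by
  intro Λ
  have hsq : ∀ j k, Real.sqrt (γ (j - k)) ^ 2 = γ (j - k) := fun j k =>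
    Real.sq_sqrt ((add_nonneg (norm_nonneg _) (norm_nonneg _)).trans (hbound j k))
  rw [← Finset.sum_coe_sort]
  refine norm_sum_le_of_almost_orthogonal (T := fun j : Λ => T j)
    (K := fun j k => Real.sqrt (γ (j - k))) (fun _ _ => Real.sqrt_nonneg _)
    (hsum.nonneg fun _ => Real.sqrt_nonneg _) (fun j k => ?_) (fun j k => ?_) (fun j => ?_)
  · rw [hsq, star_eq_adjoint, mul_def]
    exact le_add_of_nonneg_right (norm_nonneg _) |>.trans (hbound j k)
  · rw [hsq, star_eq_adjoint, mul_def]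
    exact le_add_of_nonneg_left (norm_nonneg _) |>.trans (hbound j k)
  · rw [Finset.sum_coe_sort Λ (fun k => Real.sqrt (γ (j - k)))]
    exact sum_apply_sub_le_of_hasSum (fun _ => Real.sqrt_nonneg _) hsum j Λ

theorem cotlar_knapp_stein {H : Type*} [NormedAddCommGroup H] [InnerProductSpace ℂ H]
    [CompleteSpace H] (T : ℤ → H →L[ℂ] H) (γ : ℤ → ℝ) (hγ : ∀ m, 0 ≤ γ m) (C : ℝ)
    (hbound : ∀ j k : ℤ,
      ‖(adjoint (T j)).comp (T k)‖ + ‖(T j).comp (adjoint (T k))‖ ≤ γ (j - k))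
    (hsum : HasSum (fun m => Real.sqrt (γ m)) C) :
    ∀ Λ : Finset ℤ, ‖∑ j ∈ Λ, T j‖ ≤ C :=
  cotlar_knapp_stein_general T γ C hbound hsum
end
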